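/- Let σ : G ⇢ L be a regular support, with r = rk(L). Then for every character χ ∈ Ĝ and every j ∈ {0,…,r}, Σ_{g ∈ G : ω_σ(g) = j} χ(g) = Σ_{s=0}^{r} γ_σ(s) · μ_L(s,j) · μ_≤(s, r − ω_{σ*}(χ)) · μ_≥(j,s). Consequently the pair (ω_{σ*}, ω_σ) is compatible and its Krawtchouk coefficients are K(ω_{σ*}, ω_σ)(i,j) = Σ_{s=0}^{r} γ_σ(s) μ_L(s,j) μ_≤(s, r−i) μ_≥(j,s). -/

import Mathlib

open Finset
open scoped Classical Pointwise

/-- A finite graded lattice of rank `r` (with rank function `ρ`) that is *regular*: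
the counting numbers `μ_≤`, `μ_≥` and the Möbius numbers `μ_L` depend only on ranks. -/
structure RegularLattice (L : Type*) [Lattice L] [BoundedOrder L] [Fintype L] where
  /-- the rank of the lattice -/
  r : ℕ
  /-- the rank function -/
  ρ : L → ℕ
  ρ_bot : ρ ⊥ = 0
  ρ_top : ρ ⊤ = r
  ρ_covby : ∀ S T : L, S ⋖ T → ρ T = ρ S + 1
  /-- the Möbius function of the lattice -/
  mu : L → L → ℤ
  mu_self : ∀ S : L, mu S S = 1
  mu_sum : ∀ S T : L, S < T → mu S T = - ∑ U : L, (if S ≤ U ∧ U < T then mu S U else 0)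
  /-- `μ_≤ s t` : the number of elements of rank `s` below an element of rank `t` -/
  muLE : ℕ → ℕ → ℕ
  card_le : ∀ (s : ℕ) (T : L), Nat.card {S : L // ρ S = s ∧ S ≤ T} = muLE s (ρ T)
  /-- `μ_≥ s t` : the number of elements of rank `s` above an element of rank `t` -/
  muGE : ℕ → ℕ → ℕ
  card_ge : ∀ (s : ℕ) (T : L), Nat.card {S : L // ρ S = s ∧ T ≤ S} = muGE s (ρ T)
  /-- `μ_L s t` : the common value of the Möbius function on pairs of ranks `s ≤ t`,
  with the convention `μ_L s t = 0` for `s > t` -/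
  muN : ℕ → ℕ → ℤ
  mu_eq : ∀ S T : L, S ≤ T → mu S T = muN (ρ S) (ρ T)
  muN_zero : ∀ s t : ℕ, t < s → muN s t = 0

/-- A regular support `σ : G ⇢ L` on a finite abelian group `G` with values in a
regular lattice `L`, together with its cardinality invariant `γ`. -/
structure RegularSupport (L : Type*) [Lattice L] [BoundedOrder L] [Fintype L]
    (G : Type*) [AddCommGroup G] [Fintype G] (RL : RegularLattice L) where
  /-- the support function -/
  σ : G → L
  supp_zero : ∀ g : G, σ g = ⊥ ↔ g = 0
  supp_neg : ∀ g : G, σ (-g) = σ g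
  supp_add : ∀ g₁ g₂ : G, σ (g₁ + g₂) ≤ σ g₁ ⊔ σ g₂
  supp_sup : ∀ S₁ S₂ : L,
    {g : G | σ g ≤ S₁ ⊔ S₂} = {g : G | σ g ≤ S₁} + {g : G | σ g ≤ S₂}
  /-- `γ s` : the common cardinality of `G_σ(S)` over elements `S` of rank `s` -/
  γ : ℕ → ℕ
  card_supp : ∀ S : L, Nat.card {g : G // σ g ≤ S} = γ (RL.ρ S)

/-- The dual support `σ* : Ĝ → L`, `σ*(χ) = ⋁ {S ∈ L : χ ∈ G_σ(S)*}`. -/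
noncomputable def RegularSupport.dualSupp {L : Type*} [Lattice L] [BoundedOrder L] [Fintype L]
    {G : Type*} [AddCommGroup G] [Fintype G] {RL : RegularLattice L}
    (RS : RegularSupport L G RL) (χ : AddChar G ℂˣ) : L :=
  (Finset.univ.filter (fun S : L => ∀ g : G, RS.σ g ≤ S → χ g = 1)).sup id

/-!
Group the elements of `G` by their support. Möbius inversion in `L` writes the character sum
over `{g | σ g = S}` through the sums over the subgroups `G_σ(U)`, `U ≤ S`; by orthogonality of
characters such a sum is `γ(ρ U)` if `χ` is trivial on `G_σ(U)`, i.e. if `U ≤ σ*(χ)`, and `0`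
otherwise. What is left is a sum of `μ_L(U, S) γ(ρ U)` over the pairs `U ≤ S` with `U ≤ σ*(χ)`
and `ρ S = j`, and regularity of `L` counts these pairs rank by rank.
-/

theorem sum_fiberwise_filter {ι κ M : Type*} [Fintype ι] [Fintype κ] [AddCommMonoid M]
    [DecidableEq κ] (φ : ι → κ) (p : κ → Prop) [DecidablePred p] (f : ι → M) :
    ∑ k with p k, ∑ i with φ i = k, f i = ∑ i with p (φ i), f i := by
  convert sum_fiberwise_eq_sum_filter univ {k | p k} φ f using 2
  simp

namespace RegularLattice

variable {L : Type*} [Lattice L] [BoundedOrder L] [Fintype L] (RL : RegularLattice L)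

theorem rho_strictMono : StrictMono RL.ρ := by
  intro S T hST
  induction S using WellFoundedGT.induction with
  | _ S ih =>
    obtain ⟨U, hSU, hUT⟩ := exists_covBy_le_of_lt hST
    have hρU := RL.ρ_covby S U hSU
    rcases hUT.eq_or_lt with rfl | hUT
    · omega
    · have hρUT := ih U hSU.lt hUT
      omega

theorem rho_le_r (S : L) : RL.ρ S ≤ RL.r :=
  RL.ρ_top ▸ RL.rho_strictMono.monotone le_top

theorem card_filter_le_and_rho_eq (s : ℕ) (T : L) :
    #{S | S ≤ T ∧ RL.ρ S = s} = RL.muLE s (RL.ρ T) := by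
  simp_rw [← RL.card_le s T, Nat.card_eq_fintype_card, Fintype.card_subtype, and_comm]

theorem card_filter_rho_eq_and_ge (s : ℕ) (T : L) :
    #{S | RL.ρ S = s ∧ T ≤ S} = RL.muGE s (RL.ρ T) := by
  rw [← RL.card_ge s T, Nat.card_eq_fintype_card, Fintype.card_subtype]

theorem sum_Icc_mu_right (S T : L) :
    ∑ U with S ≤ U ∧ U ≤ T, RL.mu S U = if S = T then 1 else 0 := by
  by_cases hST : S ≤ T
  · have hinsert : univ.filter (fun U => S ≤ U ∧ U ≤ T)
        = insert T (univ.filter fun U => S ≤ U ∧ U < T) := by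
      ext U
      simp only [mem_filter, mem_univ, true_and, mem_insert, le_iff_lt_or_eq (b := T)]
      grind
    rw [hinsert, sum_insert (by simp)]
    rcases hST.eq_or_lt with rfl | hlt
    · rw [RL.mu_self, sum_eq_zero fun U hU => ?_, add_zero, if_pos rfl]
      exact ((mem_filter.1 hU).2.1.not_gt (mem_filter.1 hU).2.2).elim
    · rw [RL.mu_sum S T hlt, sum_filter, if_neg hlt.ne, neg_add_cancel]
  · rw [sum_eq_zero fun U hU => absurd ((mem_filter.1 hU).2.1.trans (mem_filter.1 hU).2.2) hST,
      if_neg (by rintro rfl; exact hST le_rfl)]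

/-- The recursion for `mu` says `M * Z = 1` for the incidence matrices `M` of `mu` and `Z` of `≤`;
for square matrices this forces `Z * M = 1`, which is the recursion read along columns. -/
theorem sum_Icc_mu_left (S T : L) :
    ∑ U with S ≤ U ∧ U ≤ T, RL.mu U T = if S = T then 1 else 0 := by
  let M : Matrix L L ℤ := fun A B => if A ≤ B then RL.mu A B else 0
  let Z : Matrix L L ℤ := fun A B => if A ≤ B then 1 else 0
  have hMZ : M * Z = 1 := by
    ext A B
    rw [Matrix.mul_apply, Matrix.one_apply, ← RL.sum_Icc_mu_right, sum_filter]
    simp only [M, Z, mul_ite, mul_one, mul_zero, ← ite_and, and_comm]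
  have hZM : (Z * M) S T = (1 : Matrix L L ℤ) S T := by rw [mul_eq_one_comm.mp hMZ]
  rw [Matrix.mul_apply, Matrix.one_apply] at hZM
  rw [← hZM, sum_filter]
  simp only [M, Z, ite_mul, one_mul, zero_mul, ite_and]

theorem moebius_inversion_bot {R : Type*} [CommRing R] (F : L → R) (S : L) :
    ∑ U with U ≤ S, (RL.mu U S : R) * ∑ V with V ≤ U, F V = F S := by
  calc ∑ U with U ≤ S, (RL.mu U S : R) * ∑ V with V ≤ U, F V
      = ∑ V, (∑ U with V ≤ U ∧ U ≤ S, RL.mu U S : ℤ) * F V := by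
        simp only [mul_sum, Int.cast_sum, sum_mul]
        exact sum_comm' fun U V => by simp only [mem_filter, mem_univ, true_and]; tauto
    _ = F S := by simp [RL.sum_Icc_mu_left]

end RegularLattice

namespace RegularSupport

variable {L : Type*} [Lattice L] [BoundedOrder L] [Fintype L]
  {G : Type*} [AddCommGroup G] [Fintype G] {RL : RegularLattice L} (RS : RegularSupport L G RL)

def subgroup (S : L) : AddSubgroup G where
  carrier := {g | RS.σ g ≤ S}
  zero_mem' := by simp [(RS.supp_zero 0).2 rfl]
  add_mem' ha hb := (RS.supp_add _ _).trans (sup_le ha hb)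
  neg_mem' h := (RS.supp_neg _).trans_le h

@[simp]
theorem mem_subgroup {S : L} {g : G} : g ∈ RS.subgroup S ↔ RS.σ g ≤ S := Iff.rfl

/-- By (D), the elements `S` with `χ` trivial on `G_σ(S)` are closed under joins, so `σ*(χ)` is
the largest of them. -/
theorem le_dualSupp_iff (χ : AddChar G ℂˣ) (S : L) :
    S ≤ RS.dualSupp χ ↔ ∀ g ∈ RS.subgroup S, χ g = 1 := by
  refine ⟨fun hS g hg => ?_, fun h => le_sup (f := id) (mem_filter.2 ⟨mem_univ S, h⟩)⟩
  suffices ∀ g, RS.σ g ≤ RS.dualSupp χ → χ g = 1 from this g (hg.trans hS)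
  refine sup_induction (p := fun X => ∀ g, RS.σ g ≤ X → χ g = 1) ?_ ?_
    fun S hS => (mem_filter.1 hS).2
  · intro g hg
    rw [(RS.supp_zero g).1 (le_bot_iff.1 hg), AddChar.map_zero_eq_one]
  · intro S₁ h₁ S₂ h₂ g hg
    obtain ⟨a, ha, b, hb, rfl⟩ : g ∈ {g | RS.σ g ≤ S₁} + {g | RS.σ g ≤ S₂} :=
      RS.supp_sup S₁ S₂ ▸ hg
    rw [AddChar.map_add_eq_mul, h₁ a ha, h₂ b hb, mul_one]

theorem sum_char_filter_le (χ : AddChar G ℂˣ) (S : L) :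
    ∑ g with RS.σ g ≤ S, (χ g : ℂ)
      = if S ≤ RS.dualSupp χ then (RS.γ (RL.ρ S) : ℂ) else 0 := by
  let ψ : AddChar (RS.subgroup S) ℂ :=
    (Units.coeHom ℂ).compAddChar (χ.compAddMonoidHom (RS.subgroup S).subtype)
  have hψ : ψ = 0 ↔ S ≤ RS.dualSupp χ := by
    rw [le_dualSupp_iff, AddChar.eq_zero_iff]
    simp [ψ, Units.val_eq_one]
  have hcard : Fintype.card (RS.subgroup S) = RS.γ (RL.ρ S) := by
    rw [← RS.card_supp S, Nat.card_eq_fintype_card]; rfl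
  rw [sum_subtype (p := (· ∈ RS.subgroup S)) _ (by simp), ← hcard, ← hψ]
  exact AddChar.sum_eq_ite ψ

theorem sum_char_filter_eq (χ : AddChar G ℂˣ) (S : L) :
    ∑ g with RS.σ g = S, (χ g : ℂ)
      = ∑ U with U ≤ S ∧ U ≤ RS.dualSupp χ, (RL.mu U S : ℂ) * RS.γ (RL.ρ U) := by
  rw [← RL.moebius_inversion_bot (fun V => ∑ g with RS.σ g = V, (χ g : ℂ)) S]
  have hfiber (U : L) := sum_fiberwise_filter RS.σ (· ≤ U) fun g => (χ g : ℂ)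
  simp only [hfiber, sum_char_filter_le, mul_ite, mul_zero]
  rw [← sum_filter, filter_filter]

theorem sum_char_filter_rho_eq (χ : AddChar G ℂˣ) (j : ℕ) :
    ∑ g with RL.ρ (RS.σ g) = j, (χ g : ℂ)
      = ∑ s ∈ range (RL.r + 1), (RS.γ s : ℂ) * (RL.muN s j : ℂ)
          * (RL.muLE s (RL.ρ (RS.dualSupp χ)) : ℂ) * (RL.muGE j s : ℂ) := by
  set T := RS.dualSupp χ
  calc ∑ g with RL.ρ (RS.σ g) = j, (χ g : ℂ)
      = ∑ S with RL.ρ S = j, ∑ g with RS.σ g = S, (χ g : ℂ) :=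
        (sum_fiberwise_filter RS.σ (fun S => RL.ρ S = j) fun g => (χ g : ℂ)).symm
    _ = ∑ S with RL.ρ S = j, ∑ U with U ≤ S ∧ U ≤ T,
          (RL.mu U S : ℂ) * RS.γ (RL.ρ U) :=
        sum_congr rfl fun S _ => RS.sum_char_filter_eq χ S
    _ = ∑ U with U ≤ T, ∑ S with RL.ρ S = j ∧ U ≤ S,
          (RL.mu U S : ℂ) * RS.γ (RL.ρ U) :=
        sum_comm' fun S U => by simp only [mem_filter, mem_univ, true_and]; tauto
    _ = ∑ U with U ≤ T, (RS.γ (RL.ρ U) : ℂ) * RL.muN (RL.ρ U) j * RL.muGE j (RL.ρ U) := by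
        refine sum_congr rfl fun U _ => ?_
        have hterm (S : L) (hS : S ∈ ({S | RL.ρ S = j ∧ U ≤ S} : Finset L)) :
            (RL.mu U S : ℂ) * RS.γ (RL.ρ U) = RL.muN (RL.ρ U) j * RS.γ (RL.ρ U) := by
          rw [RL.mu_eq U S (mem_filter.1 hS).2.2, (mem_filter.1 hS).2.1]
        rw [sum_congr rfl hterm, sum_const, RL.card_filter_rho_eq_and_ge]
        ring
    _ = _ := by
        rw [← sum_fiberwise_of_maps_to' (g := RL.ρ) (t := range (RL.r + 1))
          (fun U _ => mem_range.2 (Nat.lt_succ_of_le (RL.rho_le_r U)))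
          (fun s => (RS.γ s : ℂ) * RL.muN s j * RL.muGE j s)]
        refine sum_congr rfl fun s _ => ?_
        rw [sum_const, filter_filter, RL.card_filter_le_and_rho_eq]
        ring

end RegularSupport

/-- For every character `χ` and every `0 ≤ j ≤ r`,
`Σ_{g : ω_σ(g) = j} χ(g) = Σ_{s=0}^r γ_σ(s) μ_L(s,j) μ_≤(s, r − ω_{σ*}(χ)) μ_≥(j,s)`.
Consequently the pair `(ω_{σ*}, ω_σ)` is compatible (the first conjunct) with these
sums as Krawtchouk coefficients `K(ω_{σ*}, ω_σ)(i, j)` for `i = ω_{σ*}(χ)`.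
Here `ω_σ(g) = ρ(σ(g))` and `ω_{σ*}(χ) = r − ρ(σ*(χ))`. -/
theorem stmt_8 {L : Type*} [Lattice L] [BoundedOrder L] [Fintype L]
    {G : Type*} [AddCommGroup G] [Fintype G] {RL : RegularLattice L}
    (RS : RegularSupport L G RL) :
    (∀ χ₁ χ₂ : AddChar G ℂˣ,
      RL.r - RL.ρ (RS.dualSupp χ₁) = RL.r - RL.ρ (RS.dualSupp χ₂) →
      ∀ j : ℕ,
        ∑ g : G, (if RL.ρ (RS.σ g) = j then ((χ₁ g : ℂˣ) : ℂ) else 0)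
          = ∑ g : G, (if RL.ρ (RS.σ g) = j then ((χ₂ g : ℂˣ) : ℂ) else 0)) ∧
    (∀ χ : AddChar G ℂˣ, ∀ j : ℕ, j ≤ RL.r →
      ∑ g : G, (if RL.ρ (RS.σ g) = j then ((χ g : ℂˣ) : ℂ) else 0)
        = ∑ s ∈ Finset.range (RL.r + 1),
            (RS.γ s : ℂ) * (RL.muN s j : ℂ)
              * (RL.muLE s (RL.r - (RL.r - RL.ρ (RS.dualSupp χ))) : ℂ)
              * (RL.muGE j s : ℂ)) := by
  have hsum (χ : AddChar G ℂˣ) (j : ℕ) :=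
    (sum_filter _ _).symm.trans (RS.sum_char_filter_rho_eq χ j)
  have hcorank (χ : AddChar G ℂˣ) :
      RL.r - (RL.r - RL.ρ (RS.dualSupp χ)) = RL.ρ (RS.dualSupp χ) :=
    Nat.sub_sub_self (RL.rho_le_r _)
  refine ⟨fun χ₁ χ₂ h j => ?_, fun χ j _ => by rw [hsum, hcorank]⟩
  rw [hsum χ₁, hsum χ₂, ← hcorank χ₁, ← hcorank χ₂, h]
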